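/- Suppose S ⊆ [−1,1]^n ⊆ nS for a nondegenerate simplex S in R^n (nS the homothety of S about its centroid with ratio n). Then for each j, λ_j(0) = 1/(n+1) and max over the cube [−1,1]^n of λ_j equals 1; in particular [−1,1]^n ⊆ {x : λ_j(x) ≤ 1} for all j. -/

import Mathlib

open Finset MeasureTheory

/-- The unit cube `[0,1]^n` in `ℝ^n`. -/
def unitCube (n : ℕ) : Set (Fin n → ℝ) := {x | ∀ i, 0 ≤ x i ∧ x i ≤ 1}

/-- The set of vertices of the unit cube, i.e. `{0,1}^n`. -/
def cubeVerts (n : ℕ) : Set (Fin n → ℝ) := {x | ∀ i, x i = 0 ∨ x i = 1}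

/-- The (solid) simplex spanned by `n+1` points. -/
def simplexSet {n : ℕ} (v : Fin (n + 1) → (Fin n → ℝ)) : Set (Fin n → ℝ) :=
  convexHull ℝ (Set.range v)

/-- The centroid (center of gravity) of the simplex with vertices `v`. -/
noncomputable def simplexCentroid {n : ℕ} (v : Fin (n + 1) → (Fin n → ℝ)) : Fin n → ℝ :=
  ((n : ℝ) + 1)⁻¹ • ∑ j, v j

/-- The homothety of the simplex with vertices `v`, with center the centroid and ratio `σ`. -/
noncomputable def homSimplex {n : ℕ} (v : Fin (n + 1) → (Fin n → ℝ)) (σ : ℝ) : Set (Fin n → ℝ) :=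
  (fun x => simplexCentroid v + σ • (x - simplexCentroid v)) '' simplexSet v

/-- `ξ(S) = min {σ ≥ 1 : Q_n ⊆ σS}`. -/
noncomputable def xiVal {n : ℕ} (v : Fin (n + 1) → (Fin n → ℝ)) : ℝ :=
  sInf {σ : ℝ | 1 ≤ σ ∧ unitCube n ⊆ homSimplex v σ}

/-- A function `ℝ^n → ℝ` is an affine polynomial of degree at most 1. -/
def IsAffinePoly {n : ℕ} (f : (Fin n → ℝ) → ℝ) : Prop :=
  ∃ a : Fin n → ℝ, ∃ b : ℝ, ∀ x, f x = ∑ i, a i * x i + b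

/-- `lam` is the family of basic Lagrange polynomials of the simplex with vertices `v`. -/
def IsLagrangeBasis {n : ℕ} (v : Fin (n + 1) → (Fin n → ℝ))
    (lam : Fin (n + 1) → (Fin n → ℝ) → ℝ) : Prop :=
  (∀ j, IsAffinePoly (lam j)) ∧ ∀ j k, lam j (v k) = if j = k then 1 else 0

/-- The `i`-th axial diameter of a set `S ⊆ ℝ^n`: the supremum of lengths of segments
in `S` parallel to the `i`-th coordinate axis. -/
noncomputable def axialDiam {n : ℕ} (S : Set (Fin n → ℝ)) (i : Fin n) : ℝ :=
  sSup {t : ℝ | ∃ x ∈ S, ∃ y ∈ S, (∀ k, k ≠ i → x k = y k) ∧ y i - x i = t}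

/-- The cube `[-1,1]^n`. -/
def symCube (n : ℕ) : Set (Fin n → ℝ) := {x | ∀ i, -1 ≤ x i ∧ x i ≤ 1}

/-! The Lagrange polynomials of `S` are its barycentric coordinates: they sum to `1` and are
nonnegative on `S`, so on `nS` each is at least `2/(n+1) - 1`, its value at the images of the
other vertices. The cube is symmetric, contains the vertices and lies in `nS`, and an affine `λ`
satisfies `λ(-x) = 2 λ(0) - λ(x)`. The bound at `-v_j` gives `λ_j(0) ≥ 1/(n+1)`, with equality for
all `j` because the `λ_j(0)` sum to `1`; the bound at `-x` then gives `λ_j(x) ≤ 1` on the cube,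
attained at `v_j`. -/

def affineBasisOfAffineIndependentOfCardEqFinrankAddOne {ι k V P : Type*} [Fintype ι]
    [DivisionRing k] [AddCommGroup V] [Module k V] [AddTorsor V P] [FiniteDimensional k V]
    {p : ι → P} (hp : AffineIndependent k p) (hcard : Fintype.card ι = Module.finrank k V + 1) :
    AffineBasis ι k P :=
  ⟨p, hp, hp.affineSpan_eq_top_iff_card_eq_finrank_add_one.2 hcard⟩

theorem AffineMap.apply_neg {k V : Type*} [Ring k] [AddCommGroup V] [Module k V]
    (f : V →ᵃ[k] k) (x : V) : f (-x) = 2 * f 0 - f x := by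
  rw [f.decomp]
  simp only [Pi.add_apply, map_neg, map_zero, zero_add, two_mul]
  abel

namespace AffineBasis

variable {ι E : Type*} [Fintype ι] [AddCommGroup E] [Module ℝ E]

theorem coord_homothety_centroid (b : AffineBasis ι ℝ E) (i : ι) (r : ℝ) (x : E) :
    b.coord i (AffineMap.homothety (univ.centroid ℝ b) r x) =
      r * b.coord i x + (1 - r) * (Fintype.card ι : ℝ)⁻¹ := by
  rw [AffineMap.homothety_eq_lineMap, AffineMap.apply_lineMap, AffineMap.lineMap_apply_ring',
    b.coord_apply_centroid (mem_univ i), card_univ]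
  ring

theorem two_mul_inv_card_sub_one_le_coord (b : AffineBasis ι ℝ E) (i : ι) {y : E}
    (hy : y ∈ AffineMap.homothety (univ.centroid ℝ b) ((Fintype.card ι : ℝ) - 1) ''
      convexHull ℝ (Set.range b)) :
    2 * (Fintype.card ι : ℝ)⁻¹ - 1 ≤ b.coord i y := by
  obtain ⟨x, hx, rfl⟩ := hy
  rw [b.convexHull_eq_nonneg_coord] at hx
  have hcard : (1 : ℝ) ≤ Fintype.card ι := by
    have := b.nonempty
    exact_mod_cast Fintype.card_pos
  have hconst : (1 - ((Fintype.card ι : ℝ) - 1)) * (Fintype.card ι : ℝ)⁻¹ =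
      2 * (Fintype.card ι : ℝ)⁻¹ - 1 := by
    field_simp
    ring
  rw [coord_homothety_centroid, hconst]
  linarith [mul_nonneg (sub_nonneg.2 hcard) (hx i)]

theorem coord_zero_eq_inv_card_and_isGreatest (b : AffineBasis ι ℝ E) {K : Set E}
    (hneg : ∀ x ∈ K, -x ∈ K) (hbK : ∀ i, b i ∈ K)
    (hK : K ⊆ AffineMap.homothety (univ.centroid ℝ b) ((Fintype.card ι : ℝ) - 1) ''
      convexHull ℝ (Set.range b)) (j : ι) :
    b.coord j 0 = (Fintype.card ι : ℝ)⁻¹ ∧ IsGreatest (b.coord j '' K) 1 := by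
  have hlower : ∀ i, ∀ x ∈ K, 2 * (Fintype.card ι : ℝ)⁻¹ - 1 ≤ b.coord i x := fun i x hx =>
    b.two_mul_inv_card_sub_one_le_coord i (hK hx)
  have hle : ∀ i, (Fintype.card ι : ℝ)⁻¹ ≤ b.coord i 0 := by
    intro i
    have := hlower i _ (hneg _ (hbK i))
    rw [AffineMap.apply_neg, b.coord_apply_eq] at this
    linarith
  have hzero : ∀ i, b.coord i 0 = (Fintype.card ι : ℝ)⁻¹ := by
    have hsum : ∑ _i : ι, (Fintype.card ι : ℝ)⁻¹ = ∑ i, b.coord i 0 := by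
      have := b.nonempty
      rw [b.sum_coord_apply_eq_one, sum_const, card_univ, nsmul_eq_mul,
        mul_inv_cancel₀ (by positivity)]
    exact fun i => ((sum_eq_sum_iff_of_le fun i _ => hle i).1 hsum i (mem_univ i)).symm
  refine ⟨hzero j, ⟨b j, hbK j, b.coord_apply_eq j⟩, ?_⟩
  rintro _ ⟨x, hx, rfl⟩
  have := hlower j _ (hneg x hx)
  rw [AffineMap.apply_neg, hzero] at this
  linarith

end AffineBasis

theorem IsAffinePoly.exists_affineMap {n : ℕ} {f : (Fin n → ℝ) → ℝ} (hf : IsAffinePoly f) :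
    ∃ g : (Fin n → ℝ) →ᵃ[ℝ] ℝ, ⇑g = f := by
  obtain ⟨a, c, hac⟩ := hf
  refine ⟨(∑ i, a i • LinearMap.proj i : (Fin n → ℝ) →ₗ[ℝ] ℝ).toAffineMap +
    AffineMap.const ℝ (Fin n → ℝ) c, funext fun x => ?_⟩
  simp [hac]

theorem IsLagrangeBasis.eq_coord {n : ℕ} {v : Fin (n + 1) → (Fin n → ℝ)}
    {lam : Fin (n + 1) → (Fin n → ℝ) → ℝ} (hlam : IsLagrangeBasis v lam)
    (b : AffineBasis (Fin (n + 1)) ℝ (Fin n → ℝ)) (hb : ⇑b = v) (j : Fin (n + 1)) :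
    lam j = b.coord j := by
  subst hb
  obtain ⟨g, hg⟩ := (hlam.1 j).exists_affineMap
  rw [← hg, AffineMap.ext_on b.tot (f := g) (g := b.coord j)]
  rintro _ ⟨k, rfl⟩
  simp only [hg, hlam.2 j k, b.coord_apply]

theorem simplexCentroid_eq_centroid {n : ℕ} (v : Fin (n + 1) → (Fin n → ℝ)) :
    simplexCentroid v = univ.centroid ℝ v := by
  rw [simplexCentroid, centroid_def, affineCombination_eq_linear_combination _ _ _
    (sum_centroidWeights_eq_one_of_nonempty ℝ _ univ_nonempty), smul_sum]
  simp [centroidWeights_apply]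

theorem homSimplex_eq_image_homothety {n : ℕ} (v : Fin (n + 1) → (Fin n → ℝ)) (σ : ℝ) :
    homSimplex v σ = AffineMap.homothety (univ.centroid ℝ v) σ '' simplexSet v := by
  simp [homSimplex, simplexCentroid_eq_centroid, AffineMap.homothety_apply, add_comm]

theorem neg_mem_symCube {n : ℕ} {x : Fin n → ℝ} (hx : x ∈ symCube n) : -x ∈ symCube n :=
  fun i => ⟨neg_le_neg (hx i).2, neg_le.2 (hx i).1⟩

/-- if `S ⊆ [−1,1]^n ⊆ nS` then `λ_j(0) = 1/(n+1)` for all `j`, and the maximum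
of `λ_j` over the cube `[−1,1]^n` equals `1`; in particular the cube lies in `{λ_j ≤ 1}`. -/
theorem lagrange_at_zero_and_max {n : ℕ} (v : Fin (n + 1) → (Fin n → ℝ))
    (hv : AffineIndependent ℝ v)
    (lam : Fin (n + 1) → (Fin n → ℝ) → ℝ) (hlam : IsLagrangeBasis v lam)
    (hS : simplexSet v ⊆ symCube n) (hQ : symCube n ⊆ homSimplex v n) :
    ∀ j, lam j 0 = 1 / ((n : ℝ) + 1) ∧ IsGreatest (lam j '' symCube n) 1 := by
  intro j
  let b := affineBasisOfAffineIndependentOfCardEqFinrankAddOne hv (by simp)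
  have hb : ⇑b = v := rfl
  have hK : symCube n ⊆ AffineMap.homothety (univ.centroid ℝ b)
      ((Fintype.card (Fin (n + 1)) : ℝ) - 1) '' convexHull ℝ (Set.range b) := by
    simpa [hb, homSimplex_eq_image_homothety, simplexSet] using hQ
  obtain ⟨hzero, hmax⟩ := b.coord_zero_eq_inv_card_and_isGreatest (fun _ => neg_mem_symCube)
    (fun i => hS (subset_convexHull ℝ _ ⟨i, rfl⟩)) hK j
  rw [hlam.eq_coord b hb j]
  exact ⟨by simpa using hzero, hmax⟩
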